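/- Let g : U → ℝ³ be a regular surface given in Monge form at an umbilic (k₁ = k₂ = k ≠ 0 at p = 0) and let t = 1/k. Then the parallel surface g^t = g + t·n satisfies: rank of the differential d(g^t) at the origin is 0, and the discriminant function λ(u,v) = det(g^t_u, g^t_v, n) satisfies λ(0) = λ_u(0) = λ_v(0) = 0 and det Hess λ(0) = −Γ/k₁⁴, where Γ is the 4×4 umbilic determinant in the coefficients a₃₀, a₂₁, a₁₂, a₀₃ of the cubic part. -/

import Mathlib

noncomputable section

/-- Partial derivative in the first variable. -/
def pdu (f : ℝ × ℝ → ℝ) (p : ℝ × ℝ) : ℝ := fderiv ℝ f p (1, 0)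

/-- Partial derivative in the second variable. -/
def pdv (f : ℝ × ℝ → ℝ) (p : ℝ × ℝ) : ℝ := fderiv ℝ f p (0, 1)

/-- Partial derivative in the first variable, for `ℝ³`-valued maps. -/
def Du (g : ℝ × ℝ → Fin 3 → ℝ) (p : ℝ × ℝ) : Fin 3 → ℝ := fderiv ℝ g p (1, 0)

/-- Partial derivative in the second variable, for `ℝ³`-valued maps. -/
def Dv (g : ℝ × ℝ → Fin 3 → ℝ) (p : ℝ × ℝ) : Fin 3 → ℝ := fderiv ℝ g p (0, 1)

/-- Euclidean dot product on `ℝ³`. -/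
def dot3 (a b : Fin 3 → ℝ) : ℝ := a 0 * b 0 + a 1 * b 1 + a 2 * b 2

/-- Cross product on `ℝ³`. -/
def cross3 (a b : Fin 3 → ℝ) : Fin 3 → ℝ :=
  ![a 1 * b 2 - a 2 * b 1, a 2 * b 0 - a 0 * b 2, a 0 * b 1 - a 1 * b 0]

/-- Euclidean norm on `ℝ³`. -/
def norm3 (a : Fin 3 → ℝ) : ℝ := Real.sqrt (dot3 a a)

/-- Determinant of three vectors in `ℝ³`. -/
def det3 (a b c : Fin 3 → ℝ) : ℝ := dot3 (cross3 a b) c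

/-- The unit normal of a regular surface. -/
def unitNormal (g : ℝ × ℝ → Fin 3 → ℝ) (p : ℝ × ℝ) : Fin 3 → ℝ :=
  (norm3 (cross3 (Du g p) (Dv g p)))⁻¹ • cross3 (Du g p) (Dv g p)

/-!
Write `n = ν N` with `N = (-f_u, -f_v, 1)` and `ν = (1 + f_u² + f_v²)^(-1/2)`. Then
`gᵗ_u = g_u + tν N_u + (tν_u) N`, and at an umbilic with `t = 1/k` this vanishes at the origin
(there `ν = 1`, `dν = 0`, `N_u = -k g_u`, `N_v = -k g_v`).

The `N`-components of `gᵗ_u, gᵗ_v` do not contribute to `det (gᵗ_u, gᵗ_v, n)`, so `λ = ν F` with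
`F = det [[A, -C, f_u], [-C, B, f_v], [-f_u, -f_v, 1]]`, where `A = 1 - tν f_uu`,
`B = 1 - tν f_vv`, `C = tν f_uv`. At the umbilic `A, B, C, f_u, f_v` all vanish at the origin, so
`λ` vanishes to second order there and its Hessian is that of `AB - C²`, namely
`t² (d f_uu ⊗ d f_vv + d f_vv ⊗ d f_uu - 2 d f_uv ⊗ d f_uv)`. Its determinant is `-t⁴` times the
resultant `Γ` of the quadratic forms `a₃₀ x² + 2a₂₁ xy + a₁₂ y²` and `a₂₁ x² + 2a₁₂ xy + a₀₃ y²`.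
-/

section SecondDerivative

variable {E : Type*} [NormedAddCommGroup E] [NormedSpace ℝ E] {φ ψ : E → ℝ} {x : E}

theorem ContDiff.differentiable_fderiv (hφ : ContDiff ℝ 2 φ) :
    Differentiable ℝ (fderiv ℝ φ) :=
  (hφ.fderiv_right (m := 1) (by norm_num)).differentiable one_ne_zero

theorem fderiv_apply_eq_fderiv_fderiv (hφ : ContDiff ℝ 2 φ) (x v w : E) :
    fderiv ℝ (fun y => fderiv ℝ φ y w) x v = fderiv ℝ (fderiv ℝ φ) x v w := by
  rw [fderiv_clm_apply (hφ.differentiable_fderiv x) (differentiableAt_const w)]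
  simp

theorem fderiv_fderiv_symm (hφ : ContDiff ℝ 2 φ) (x v w : E) :
    fderiv ℝ (fderiv ℝ φ) x v w = fderiv ℝ (fderiv ℝ φ) x w v :=
  hφ.contDiffAt.isSymmSndFDerivAt (by simp) v w

theorem fderiv_fderiv_fun_add_apply (hφ : ContDiff ℝ 2 φ) (hψ : ContDiff ℝ 2 ψ) (v w : E) :
    fderiv ℝ (fderiv ℝ fun y => φ y + ψ y) x v w =
      fderiv ℝ (fderiv ℝ φ) x v w + fderiv ℝ (fderiv ℝ ψ) x v w := by
  have h : fderiv ℝ (fun y => φ y + ψ y) = fun y => fderiv ℝ φ y + fderiv ℝ ψ y :=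
    funext fun y => fderiv_fun_add (hφ.differentiable two_ne_zero y)
      (hψ.differentiable two_ne_zero y)
  rw [h, fderiv_fun_add (hφ.differentiable_fderiv x) (hψ.differentiable_fderiv x)]
  rfl

theorem fderiv_fderiv_fun_sub_apply (hφ : ContDiff ℝ 2 φ) (hψ : ContDiff ℝ 2 ψ) (v w : E) :
    fderiv ℝ (fderiv ℝ fun y => φ y - ψ y) x v w =
      fderiv ℝ (fderiv ℝ φ) x v w - fderiv ℝ (fderiv ℝ ψ) x v w := by
  have h : fderiv ℝ (fun y => φ y - ψ y) = fun y => fderiv ℝ φ y - fderiv ℝ ψ y :=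
    funext fun y => fderiv_fun_sub (hφ.differentiable two_ne_zero y)
      (hψ.differentiable two_ne_zero y)
  rw [h, fderiv_fun_sub (hφ.differentiable_fderiv x) (hψ.differentiable_fderiv x)]
  rfl

theorem fderiv_fderiv_fun_mul_apply (hφ : ContDiff ℝ 2 φ) (hψ : ContDiff ℝ 2 ψ) (v w : E) :
    fderiv ℝ (fderiv ℝ fun y => φ y * ψ y) x v w =
      φ x * fderiv ℝ (fderiv ℝ ψ) x v w + fderiv ℝ φ x v * fderiv ℝ ψ x w +
        fderiv ℝ ψ x v * fderiv ℝ φ x w + ψ x * fderiv ℝ (fderiv ℝ φ) x v w := by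
  have hφ' := hφ.differentiable two_ne_zero
  have hψ' := hψ.differentiable two_ne_zero
  have h : fderiv ℝ (fun y => φ y * ψ y) =
      fun y => φ y • fderiv ℝ ψ y + ψ y • fderiv ℝ φ y :=
    funext fun y => fderiv_fun_mul (hφ' y) (hψ' y)
  have hD : HasFDerivAt (fun y => φ y • fderiv ℝ ψ y + ψ y • fderiv ℝ φ y) _ x :=
    ((hφ' x).hasFDerivAt.smul (hψ.differentiable_fderiv x).hasFDerivAt).add
      ((hψ' x).hasFDerivAt.smul (hφ.differentiable_fderiv x).hasFDerivAt)
  rw [h, hD.fderiv]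
  simp
  ring

theorem fderiv_fderiv_fun_mul_apply_of_eq_zero_of_fderiv_eq_zero (hφ : ContDiff ℝ 2 φ)
    (hψ : ContDiff ℝ 2 ψ) (hψx : ψ x = 0) (hψ' : fderiv ℝ ψ x = 0) (v w : E) :
    fderiv ℝ (fderiv ℝ fun y => φ y * ψ y) x v w =
      φ x * fderiv ℝ (fderiv ℝ ψ) x v w := by
  simp [fderiv_fderiv_fun_mul_apply hφ hψ, hψx, hψ']

theorem hasFDerivAt_vec3 {φ₀ φ₁ φ₂ : E → ℝ} (h₀ : DifferentiableAt ℝ φ₀ x)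
    (h₁ : DifferentiableAt ℝ φ₁ x) (h₂ : DifferentiableAt ℝ φ₂ x) :
    HasFDerivAt (fun y => ![φ₀ y, φ₁ y, φ₂ y])
      (ContinuousLinearMap.pi ![fderiv ℝ φ₀ x, fderiv ℝ φ₁ x, fderiv ℝ φ₂ x]) x := by
  refine hasFDerivAt_pi'' fun i => ?_
  fin_cases i
  exacts [h₀.hasFDerivAt, h₁.hasFDerivAt, h₂.hasFDerivAt]

theorem fderiv_vec3_apply {φ₀ φ₁ φ₂ : E → ℝ} (h₀ : DifferentiableAt ℝ φ₀ x)
    (h₁ : DifferentiableAt ℝ φ₁ x) (h₂ : DifferentiableAt ℝ φ₂ x) (v : E) :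
    fderiv ℝ (fun y => ![φ₀ y, φ₁ y, φ₂ y]) x v =
      ![fderiv ℝ φ₀ x v, fderiv ℝ φ₁ x v, fderiv ℝ φ₂ x v] := by
  rw [(hasFDerivAt_vec3 h₀ h₁ h₂).fderiv]
  ext i
  fin_cases i <;> rfl

end SecondDerivative

theorem det3_add_smul_add_smul_smul (a b n : Fin 3 → ℝ) (c d s : ℝ) :
    det3 (a + c • n) (b + d • n) (s • n) = s * det3 a b n := by
  simp [det3, dot3, cross3]
  ring

theorem det_sylvester_quadratics (a b c d e f : ℝ) :
    (!![a, b, c, 0; 0, a, b, c; d, e, f, 0; 0, d, e, f] : Matrix (Fin 4) (Fin 4) ℝ).det =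
      (a * f - c * d) ^ 2 - (a * e - b * d) * (b * f - c * e) := by
  simp [Matrix.det_succ_row_zero, Fin.sum_univ_succ, Fin.succAbove]
  ring

section Partials

variable {φ : ℝ × ℝ → ℝ}

theorem ContDiff.pdu {n m : WithTop ℕ∞} (hφ : ContDiff ℝ n φ) (hmn : m + 1 ≤ n) :
    ContDiff ℝ m (pdu φ) :=
  (hφ.fderiv_right hmn).clm_apply contDiff_const

theorem ContDiff.pdv {n m : WithTop ℕ∞} (hφ : ContDiff ℝ n φ) (hmn : m + 1 ≤ n) :
    ContDiff ℝ m (pdv φ) :=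
  (hφ.fderiv_right hmn).clm_apply contDiff_const

theorem pdu_pdu_eq_fderiv_fderiv (hφ : ContDiff ℝ 2 φ) (p : ℝ × ℝ) :
    pdu (pdu φ) p = fderiv ℝ (fderiv ℝ φ) p (1, 0) (1, 0) :=
  fderiv_apply_eq_fderiv_fderiv hφ p _ _

theorem pdu_pdv_eq_fderiv_fderiv (hφ : ContDiff ℝ 2 φ) (p : ℝ × ℝ) :
    pdu (pdv φ) p = fderiv ℝ (fderiv ℝ φ) p (1, 0) (0, 1) :=
  fderiv_apply_eq_fderiv_fderiv hφ p _ _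

theorem pdv_pdu_eq_fderiv_fderiv (hφ : ContDiff ℝ 2 φ) (p : ℝ × ℝ) :
    pdv (pdu φ) p = fderiv ℝ (fderiv ℝ φ) p (0, 1) (1, 0) :=
  fderiv_apply_eq_fderiv_fderiv hφ p _ _

theorem pdv_pdv_eq_fderiv_fderiv (hφ : ContDiff ℝ 2 φ) (p : ℝ × ℝ) :
    pdv (pdv φ) p = fderiv ℝ (fderiv ℝ φ) p (0, 1) (0, 1) :=
  fderiv_apply_eq_fderiv_fderiv hφ p _ _

theorem pdu_pdv_comm (hφ : ContDiff ℝ 2 φ) : pdu (pdv φ) = pdv (pdu φ) := by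
  funext p
  rw [pdu_pdv_eq_fderiv_fderiv hφ, pdv_pdu_eq_fderiv_fderiv hφ, fderiv_fderiv_symm hφ]

end Partials

namespace Monge

variable (f : ℝ × ℝ → ℝ) (t : ℝ)

def graph : ℝ × ℝ → Fin 3 → ℝ := fun p => ![p.1, p.2, f p]

def parallel (p : ℝ × ℝ) : Fin 3 → ℝ := graph f p + t • unitNormal (graph f) p

def discriminant (p : ℝ × ℝ) : ℝ :=
  det3 (Du (parallel f t) p) (Dv (parallel f t) p) (unitNormal (graph f) p)

def normal : ℝ × ℝ → Fin 3 → ℝ := fun p => ![-pdu f p, -pdv f p, 1]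

def normalScale (p : ℝ × ℝ) : ℝ := (√(1 + (pdu f p ^ 2 + pdv f p ^ 2)))⁻¹

def focalA (p : ℝ × ℝ) : ℝ := 1 - t * (normalScale f p * pdu (pdu f) p)

def focalB (p : ℝ × ℝ) : ℝ := 1 - t * (normalScale f p * pdv (pdv f) p)

def focalC (p : ℝ × ℝ) : ℝ := t * (normalScale f p * pdv (pdu f) p)

/-- `det [[focalA, -focalC, f_u], [-focalC, focalB, f_v], [-f_u, -f_v, 1]]`, expanded. -/
def focalDet (p : ℝ × ℝ) : ℝ :=
  focalA f t p * focalB f t p - focalC f t p ^ 2 +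
    (focalB f t p * pdu f p ^ 2 + focalA f t p * pdv f p ^ 2 +
      2 * focalC f t p * (pdu f p * pdv f p))

variable {f t} {n : WithTop ℕ∞}

theorem contDiff_normalScale (hf : ContDiff ℝ (n + 1) f) : ContDiff ℝ n (normalScale f) := by
  have hpos : ∀ p, 0 < 1 + (pdu f p ^ 2 + pdv f p ^ 2) := fun p => by positivity
  refine ((contDiff_const.add (((hf.pdu le_rfl).pow 2).add ((hf.pdv le_rfl).pow 2))).sqrt
    fun p => (hpos p).ne').inv fun p => ?_
  exact (Real.sqrt_pos.2 (hpos p)).ne'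

theorem contDiff_focalA (hf : ContDiff ℝ (n + 2) f) : ContDiff ℝ n (focalA f t) := by
  have hf' : ContDiff ℝ (n + 1 + 1) f := hf.of_le (by rw [add_assoc]; norm_num)
  exact contDiff_const.sub (contDiff_const.mul
    ((contDiff_normalScale hf'.of_succ).mul ((hf'.pdu le_rfl).pdu le_rfl)))

theorem contDiff_focalB (hf : ContDiff ℝ (n + 2) f) : ContDiff ℝ n (focalB f t) := by
  have hf' : ContDiff ℝ (n + 1 + 1) f := hf.of_le (by rw [add_assoc]; norm_num)
  exact contDiff_const.sub (contDiff_const.mul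
    ((contDiff_normalScale hf'.of_succ).mul ((hf'.pdv le_rfl).pdv le_rfl)))

theorem contDiff_focalC (hf : ContDiff ℝ (n + 2) f) : ContDiff ℝ n (focalC f t) := by
  have hf' : ContDiff ℝ (n + 1 + 1) f := hf.of_le (by rw [add_assoc]; norm_num)
  exact contDiff_const.mul ((contDiff_normalScale hf'.of_succ).mul ((hf'.pdu le_rfl).pdv le_rfl))

theorem Du_graph (hf : Differentiable ℝ f) (p : ℝ × ℝ) :
    Du (graph f) p = ![1, 0, pdu f p] := by
  unfold graph
  rw [Du, fderiv_vec3_apply differentiableAt_fst differentiableAt_snd (hf p)]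
  simp [pdu, fderiv_fst, fderiv_snd]

theorem Dv_graph (hf : Differentiable ℝ f) (p : ℝ × ℝ) :
    Dv (graph f) p = ![0, 1, pdv f p] := by
  unfold graph
  rw [Dv, fderiv_vec3_apply differentiableAt_fst differentiableAt_snd (hf p)]
  simp [pdv, fderiv_fst, fderiv_snd]

theorem unitNormal_graph (hf : Differentiable ℝ f) (p : ℝ × ℝ) :
    unitNormal (graph f) p = normalScale f p • normal f p := by
  have hcross : cross3 ![1, 0, pdu f p] ![0, 1, pdv f p] = normal f p := by
    ext i; fin_cases i <;> simp [cross3, normal]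
  have hnorm : norm3 (normal f p) = √(1 + (pdu f p ^ 2 + pdv f p ^ 2)) := by
    simp only [norm3, dot3, normal]
    congr 1
    simp
    ring
  rw [unitNormal, Du_graph hf, Dv_graph hf, hcross, hnorm, normalScale]

theorem Du_normal (hf : ContDiff ℝ 2 f) (p : ℝ × ℝ) :
    Du (normal f) p = ![-pdu (pdu f) p, -pdv (pdu f) p, 0] := by
  have hu := (hf.pdu (m := 1) le_rfl).differentiable one_ne_zero
  have hv := (hf.pdv (m := 1) le_rfl).differentiable one_ne_zero
  unfold normal
  rw [Du, fderiv_vec3_apply (φ₀ := fun q => -pdu f q) (φ₁ := fun q => -pdv f q)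
    (hu p).neg (hv p).neg (differentiableAt_const _), ← pdu_pdv_comm hf]
  simpa [fderiv_fun_neg] using ⟨rfl, rfl⟩

theorem Dv_normal (hf : ContDiff ℝ 2 f) (p : ℝ × ℝ) :
    Dv (normal f) p = ![-pdv (pdu f) p, -pdv (pdv f) p, 0] := by
  have hu := (hf.pdu (m := 1) le_rfl).differentiable one_ne_zero
  have hv := (hf.pdv (m := 1) le_rfl).differentiable one_ne_zero
  unfold normal
  rw [Dv, fderiv_vec3_apply (φ₀ := fun q => -pdu f q) (φ₁ := fun q => -pdv f q)
    (hu p).neg (hv p).neg (differentiableAt_const _)]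
  simpa [fderiv_fun_neg] using ⟨rfl, rfl⟩

theorem fderiv_parallel_apply (hf : ContDiff ℝ 2 f) (p v : ℝ × ℝ) :
    fderiv ℝ (parallel f t) p v = fderiv ℝ (graph f) p v +
      t • (normalScale f p • fderiv ℝ (normal f) p v +
        fderiv ℝ (normalScale f) p v • normal f p) := by
  have hf1 : Differentiable ℝ f := hf.differentiable two_ne_zero
  have hu := (hf.pdu (m := 1) le_rfl).differentiable one_ne_zero
  have hv := (hf.pdv (m := 1) le_rfl).differentiable one_ne_zero
  have hG : DifferentiableAt ℝ (graph f) p :=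
    (hasFDerivAt_vec3 differentiableAt_fst differentiableAt_snd (hf1 p)).differentiableAt
  have hS : DifferentiableAt ℝ (normalScale f) p :=
    (contDiff_normalScale (n := 1) hf).differentiable one_ne_zero p
  have hN : DifferentiableAt ℝ (normal f) p :=
    (hasFDerivAt_vec3 (φ₀ := fun q => -pdu f q) (φ₁ := fun q => -pdv f q)
      (hu p).neg (hv p).neg (differentiableAt_const (1 : ℝ))).differentiableAt
  have hP : parallel f t = fun q => graph f q + t • (normalScale f q • normal f q) := by
    funext q
    rw [parallel, unitNormal_graph hf1]
  have hD : HasFDerivAt (fun q => graph f q + t • (normalScale f q • normal f q)) _ p :=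
    hG.hasFDerivAt.add ((hS.hasFDerivAt.smul hN.hasFDerivAt).const_smul t)
  rw [hP, hD.fderiv]
  simp [add_comm]

theorem Du_parallel (hf : ContDiff ℝ 2 f) (p : ℝ × ℝ) :
    Du (parallel f t) p = (![1, 0, pdu f p] +
      (t * normalScale f p) • ![-pdu (pdu f) p, -pdv (pdu f) p, 0]) +
      (t * pdu (normalScale f) p) • normal f p := by
  rw [Du, fderiv_parallel_apply hf, ← Du, ← Du, Du_graph (hf.differentiable two_ne_zero),
    Du_normal hf]
  ext i; fin_cases i <;> simp [pdu, normal] <;> ring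

theorem Dv_parallel (hf : ContDiff ℝ 2 f) (p : ℝ × ℝ) :
    Dv (parallel f t) p = (![0, 1, pdv f p] +
      (t * normalScale f p) • ![-pdv (pdu f) p, -pdv (pdv f) p, 0]) +
      (t * pdv (normalScale f) p) • normal f p := by
  rw [Dv, fderiv_parallel_apply hf, ← Dv, ← Dv, Dv_graph (hf.differentiable two_ne_zero),
    Dv_normal hf]
  ext i; fin_cases i <;> simp [pdv, normal] <;> ring

theorem discriminant_eq (hf : ContDiff ℝ 2 f) :
    discriminant f t = fun p => normalScale f p * focalDet f t p := by
  funext p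
  rw [discriminant, Du_parallel hf, Dv_parallel hf,
    unitNormal_graph (hf.differentiable two_ne_zero), det3_add_smul_add_smul_smul]
  congr 1
  simp [det3, dot3, cross3, normal, focalDet, focalA, focalB, focalC]
  ring

theorem contDiff_focalDet (hf : ContDiff ℝ (n + 2) f) : ContDiff ℝ n (focalDet f t) := by
  have hf' : ContDiff ℝ (n + 1) f := hf.of_le (by gcongr; norm_num)
  have hu : ContDiff ℝ n (pdu f) := hf'.pdu le_rfl
  have hv : ContDiff ℝ n (pdv f) := hf'.pdv le_rfl
  have hA : ContDiff ℝ n (focalA f t) := contDiff_focalA hf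
  have hB : ContDiff ℝ n (focalB f t) := contDiff_focalB hf
  have hC : ContDiff ℝ n (focalC f t) := contDiff_focalC hf
  unfold focalDet
  fun_prop

theorem contDiff_discriminant (hf : ContDiff ℝ (n + 2) f) :
    ContDiff ℝ n (discriminant f t) := by
  rw [discriminant_eq (hf.of_le le_add_self)]
  exact (contDiff_normalScale (hf.of_le (by gcongr; norm_num))).mul (contDiff_focalDet hf)

structure IsUmbilic (f : ℝ × ℝ → ℝ) (k : ℝ) : Prop where
  pdu_eq : pdu f 0 = 0
  pdv_eq : pdv f 0 = 0
  pdu_pdu_eq : pdu (pdu f) 0 = k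
  pdv_pdu_eq : pdv (pdu f) 0 = 0
  pdv_pdv_eq : pdv (pdv f) 0 = k

variable {k : ℝ}

namespace IsUmbilic

theorem normalScale_eq (h : IsUmbilic f k) : normalScale f 0 = 1 := by
  simp [normalScale, h.pdu_eq, h.pdv_eq]

theorem fderiv_normalScale (hf : ContDiff ℝ 2 f) (h : IsUmbilic f k) :
    fderiv ℝ (normalScale f) 0 = 0 := by
  have hu := (hf.pdu (m := 1) le_rfl).differentiable one_ne_zero 0
  have hv := (hf.pdv (m := 1) le_rfl).differentiable one_ne_zero 0
  have hq : HasFDerivAt (fun p => pdu f p ^ 2 + pdv f p ^ 2) (0 : ℝ × ℝ →L[ℝ] ℝ) 0 := by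
    simpa [h.pdu_eq, h.pdv_eq] using (hu.hasFDerivAt.pow 2).fun_add (hv.hasFDerivAt.pow 2)
  set ρ : ℝ → ℝ := fun r => (√(1 + r))⁻¹
  have hh : DifferentiableAt ℝ ρ (pdu f 0 ^ 2 + pdv f 0 ^ 2) := by
    rw [h.pdu_eq, h.pdv_eq]
    fun_prop (disch := norm_num)
  change fderiv ℝ (ρ ∘ fun p => pdu f p ^ 2 + pdv f p ^ 2) 0 = 0
  simpa using (hh.hasFDerivAt.comp (0 : ℝ × ℝ) hq).fderiv

theorem hasFDerivAt_normalScale_mul (hf : ContDiff ℝ 2 f) (h : IsUmbilic f k)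
    {φ : ℝ × ℝ → ℝ} (hφ : DifferentiableAt ℝ φ 0) :
    HasFDerivAt (fun p => normalScale f p * φ p) (fderiv ℝ φ 0) 0 := by
  have hs : HasFDerivAt (normalScale f) (0 : ℝ × ℝ →L[ℝ] ℝ) 0 := by
    rw [← h.fderiv_normalScale hf]
    exact ((contDiff_normalScale (n := 1) hf).differentiable one_ne_zero 0).hasFDerivAt
  simpa [h.normalScale_eq] using hs.fun_mul hφ.hasFDerivAt

theorem focalA_eq (h : IsUmbilic f k) (htk : t * k = 1) : focalA f t 0 = 0 := by
  simp [focalA, h.normalScale_eq, h.pdu_pdu_eq, htk]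

theorem focalB_eq (h : IsUmbilic f k) (htk : t * k = 1) : focalB f t 0 = 0 := by
  simp [focalB, h.normalScale_eq, h.pdv_pdv_eq, htk]

theorem focalC_eq (h : IsUmbilic f k) : focalC f t 0 = 0 := by
  simp [focalC, h.pdv_pdu_eq]

theorem focalDet_eq (h : IsUmbilic f k) (htk : t * k = 1) : focalDet f t 0 = 0 := by
  simp [focalDet, h.focalA_eq htk, h.focalB_eq htk, h.focalC_eq, h.pdu_eq, h.pdv_eq]

theorem fderiv_focalA (hf : ContDiff ℝ 3 f) (h : IsUmbilic f k) :
    fderiv ℝ (focalA f t) 0 = -(t • fderiv ℝ (pdu (pdu f)) 0) := by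
  have hφ := ((hf.pdu (m := 2) le_rfl).pdu (m := 1) le_rfl).differentiable one_ne_zero 0
  have hs := h.hasFDerivAt_normalScale_mul (hf.of_le (by norm_num)) hφ
  exact ((hs.const_mul t).const_sub 1).fderiv

theorem fderiv_focalB (hf : ContDiff ℝ 3 f) (h : IsUmbilic f k) :
    fderiv ℝ (focalB f t) 0 = -(t • fderiv ℝ (pdv (pdv f)) 0) := by
  have hφ := ((hf.pdv (m := 2) le_rfl).pdv (m := 1) le_rfl).differentiable one_ne_zero 0
  have hs := h.hasFDerivAt_normalScale_mul (hf.of_le (by norm_num)) hφ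
  exact ((hs.const_mul t).const_sub 1).fderiv

theorem fderiv_focalC (hf : ContDiff ℝ 3 f) (h : IsUmbilic f k) :
    fderiv ℝ (focalC f t) 0 = t • fderiv ℝ (pdv (pdu f)) 0 := by
  have hφ := ((hf.pdu (m := 2) le_rfl).pdv (m := 1) le_rfl).differentiable one_ne_zero 0
  have hs := h.hasFDerivAt_normalScale_mul (hf.of_le (by norm_num)) hφ
  exact (hs.const_mul t).fderiv

theorem fderiv_focalDet (hf : ContDiff ℝ 3 f) (h : IsUmbilic f k) (htk : t * k = 1) :
    fderiv ℝ (focalDet f t) 0 = 0 := by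
  have hu := (hf.pdu (m := 2) (by norm_num)).differentiable two_ne_zero
  have hv := (hf.pdv (m := 2) (by norm_num)).differentiable two_ne_zero
  have hA : ContDiff ℝ 1 (focalA f t) := contDiff_focalA (hf.of_le (by norm_num))
  have hB : ContDiff ℝ 1 (focalB f t) := contDiff_focalB (hf.of_le (by norm_num))
  have hC : ContDiff ℝ 1 (focalC f t) := contDiff_focalC (hf.of_le (by norm_num))
  have hA' := hA.differentiable one_ne_zero
  have hB' := hB.differentiable one_ne_zero
  have hC' := hC.differentiable one_ne_zero
  unfold focalDet
  simp only [sq]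
  simp (disch := fun_prop) only [fderiv_fun_add, fderiv_fun_sub, fderiv_fun_mul]
  simp [h.focalA_eq htk, h.focalB_eq htk, h.focalC_eq, h.pdu_eq, h.pdv_eq]

theorem fderiv_fderiv_focalDet (hf : ContDiff ℝ 4 f) (h : IsUmbilic f k) (htk : t * k = 1)
    (v w : ℝ × ℝ) :
    fderiv ℝ (fderiv ℝ (focalDet f t)) 0 v w =
      t ^ 2 * (fderiv ℝ (pdu (pdu f)) 0 v * fderiv ℝ (pdv (pdv f)) 0 w +
        fderiv ℝ (pdv (pdv f)) 0 v * fderiv ℝ (pdu (pdu f)) 0 w -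
        2 * (fderiv ℝ (pdv (pdu f)) 0 v * fderiv ℝ (pdv (pdu f)) 0 w)) := by
  have hf3 : ContDiff ℝ 3 f := hf.of_le (by norm_num)
  have hu : ContDiff ℝ 2 (pdu f) := hf.pdu (by norm_num)
  have hv : ContDiff ℝ 2 (pdv f) := hf.pdv (by norm_num)
  have hA : ContDiff ℝ 2 (focalA f t) := contDiff_focalA (hf.of_le (by norm_num))
  have hB : ContDiff ℝ 2 (focalB f t) := contDiff_focalB (hf.of_le (by norm_num))
  have hC : ContDiff ℝ 2 (focalC f t) := contDiff_focalC (hf.of_le (by norm_num))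
  have hu' : Differentiable ℝ (pdu f) := hu.differentiable two_ne_zero
  have hv' : Differentiable ℝ (pdv f) := hv.differentiable two_ne_zero
  unfold focalDet
  simp only [sq]
  simp (disch := fun_prop) only [fderiv_fderiv_fun_add_apply, fderiv_fderiv_fun_sub_apply,
    fderiv_fderiv_fun_mul_apply]
  simp [h.focalA_eq htk, h.focalB_eq htk, h.focalC_eq, h.fderiv_focalA hf3, h.fderiv_focalB hf3,
    h.fderiv_focalC hf3, h.pdu_eq, h.pdv_eq, fderiv_fun_mul (hu' 0) (hu' 0),
    fderiv_fun_mul (hv' 0) (hv' 0), fderiv_fun_mul (hu' 0) (hv' 0)]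
  ring

theorem fderiv_parallel (hf : ContDiff ℝ 2 f) (h : IsUmbilic f k) (htk : t * k = 1) :
    fderiv ℝ (parallel f t) 0 = 0 := by
  have hsu : pdu (normalScale f) 0 = 0 := by simp [pdu, h.fderiv_normalScale hf]
  have hsv : pdv (normalScale f) 0 = 0 := by simp [pdv, h.fderiv_normalScale hf]
  have hu : Du (parallel f t) 0 = 0 := by
    rw [Du_parallel hf, hsu]
    simp [h.normalScale_eq, h.pdu_eq, h.pdu_pdu_eq, h.pdv_pdu_eq, htk]
  have hv : Dv (parallel f t) 0 = 0 := by
    rw [Dv_parallel hf, hsv]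
    simp [h.normalScale_eq, h.pdv_eq, h.pdv_pdv_eq, h.pdv_pdu_eq, htk]
  exact ContinuousLinearMap.prod_ext (ContinuousLinearMap.ext_ring (by simpa [Du] using hu))
    (ContinuousLinearMap.ext_ring (by simpa [Dv] using hv))

theorem discriminant_eq_zero (hf : ContDiff ℝ 2 f) (h : IsUmbilic f k) (htk : t * k = 1) :
    discriminant f t 0 = 0 := by
  simp [discriminant_eq hf, h.focalDet_eq htk]

theorem fderiv_discriminant (hf : ContDiff ℝ 3 f) (h : IsUmbilic f k) (htk : t * k = 1) :
    fderiv ℝ (discriminant f t) 0 = 0 := by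
  have hs := (contDiff_normalScale (n := 1) (hf.of_le (by norm_num))).differentiable one_ne_zero 0
  have hF : DifferentiableAt ℝ (focalDet f t) 0 :=
    (contDiff_focalDet (n := 1) (hf.of_le (by norm_num))).differentiable one_ne_zero 0
  rw [discriminant_eq (hf.of_le (by norm_num)), fderiv_fun_mul hs hF, h.fderiv_focalDet hf htk,
    h.focalDet_eq htk]
  simp

theorem fderiv_fderiv_discriminant (hf : ContDiff ℝ 4 f) (h : IsUmbilic f k) (htk : t * k = 1)
    (v w : ℝ × ℝ) :
    fderiv ℝ (fderiv ℝ (discriminant f t)) 0 v w =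
      t ^ 2 * (fderiv ℝ (pdu (pdu f)) 0 v * fderiv ℝ (pdv (pdv f)) 0 w +
        fderiv ℝ (pdv (pdv f)) 0 v * fderiv ℝ (pdu (pdu f)) 0 w -
        2 * (fderiv ℝ (pdv (pdu f)) 0 v * fderiv ℝ (pdv (pdu f)) 0 w)) := by
  rw [discriminant_eq (hf.of_le (by norm_num)),
    fderiv_fderiv_fun_mul_apply_of_eq_zero_of_fderiv_eq_zero
      (contDiff_normalScale (hf.of_le (by norm_num))) (contDiff_focalDet (hf.of_le (by norm_num)))
      (h.focalDet_eq htk) (h.fderiv_focalDet (hf.of_le (by norm_num)) htk),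
    h.normalScale_eq, one_mul, h.fderiv_fderiv_focalDet hf htk]

end IsUmbilic

end Monge

open Monge in
theorem stmt16
    (f : ℝ × ℝ → ℝ) (hf : ContDiff ℝ (⊤ : ℕ∞) f)
    (k a30 a21 a12 a03 : ℝ) (hk : k ≠ 0)
    (h10 : pdu f 0 = 0) (h01 : pdv f 0 = 0)
    (h20 : pdu (pdu f) 0 = k) (h11 : pdv (pdu f) 0 = 0) (h02 : pdv (pdv f) 0 = k)
    (h30 : pdu (pdu (pdu f)) 0 = a30) (h21 : pdv (pdu (pdu f)) 0 = a21)
    (h12 : pdv (pdv (pdu f)) 0 = a12) (h03 : pdv (pdv (pdv f)) 0 = a03)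
    (g : ℝ × ℝ → Fin 3 → ℝ) (hg : g = fun p => ![p.1, p.2, f p])
    (gt : ℝ × ℝ → Fin 3 → ℝ) (hgt : gt = fun p => g p + (1 / k) • unitNormal g p)
    (lam : ℝ × ℝ → ℝ)
    (hlam : lam = fun p => det3 (Du gt p) (Dv gt p) (unitNormal g p))
    (Γ : ℝ)
    (hGamma : Γ = (!![a30, 2*a21, a12, 0;
                      0, a30, 2*a21, a12;
                      a21, 2*a12, a03, 0;
                      0, a21, 2*a12, a03] : Matrix (Fin 4) (Fin 4) ℝ).det) :
    fderiv ℝ gt 0 = 0 ∧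
    lam 0 = 0 ∧ pdu lam 0 = 0 ∧ pdv lam 0 = 0 ∧
    (!![pdu (pdu lam) 0, pdu (pdv lam) 0;
        pdv (pdu lam) 0, pdv (pdv lam) 0] : Matrix (Fin 2) (Fin 2) ℝ).det
      = -Γ / k ^ 4 := by
  have hf4 : ContDiff ℝ 4 f := hf.of_le (WithTop.coe_le_coe.2 le_top)
  have hf3 : ContDiff ℝ 3 f := hf4.of_le (by norm_num)
  have hf2 : ContDiff ℝ 2 f := hf4.of_le (by norm_num)
  have h : IsUmbilic f k := ⟨h10, h01, h20, h11, h02⟩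
  have htk : 1 / k * k = 1 := one_div_mul_cancel hk
  have hgt' : gt = parallel f (1 / k) := by rw [hgt, hg]; rfl
  have hlam' : lam = discriminant f (1 / k) := by rw [hlam, hgt', hg]; rfl
  have hlam2 : ContDiff ℝ 2 lam := hlam' ▸ contDiff_discriminant (hf4.of_le (by norm_num))
  have hdlam : fderiv ℝ lam 0 = 0 := hlam' ▸ h.fderiv_discriminant hf3 htk
  have e21 : pdu (pdv (pdu f)) 0 = a21 := by
    rw [pdu_pdv_comm (hf3.pdu le_rfl)]
    exact h21
  have e12 : pdu (pdv (pdv f)) 0 = a12 := by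
    rw [pdu_pdv_comm (hf3.pdv le_rfl), pdu_pdv_comm hf2]
    exact h12
  refine ⟨hgt' ▸ h.fderiv_parallel hf2 htk, hlam' ▸ h.discriminant_eq_zero hf2 htk,
    by simp [pdu, hdlam], by simp [pdv, hdlam], ?_⟩
  rw [Matrix.det_fin_two_of, hGamma, det_sylvester_quadratics, pdu_pdu_eq_fderiv_fderiv hlam2,
    pdu_pdv_eq_fderiv_fderiv hlam2, pdv_pdu_eq_fderiv_fderiv hlam2, pdv_pdv_eq_fderiv_fderiv hlam2,
    hlam']
  simp only [h.fderiv_fderiv_discriminant hf4 htk, ← pdu.eq_1, ← pdv.eq_1]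
  rw [h30, h21, h12, h03, e21, e12]
  field_simp
  ring
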